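/- Let (E,L) be a simple complex of oriented matroids with tope set T, let R ∈ T, and let e ∈ E define a proper face of R, i.e. there is X ∈ L with X ≠ 0, X ≤ R and X_e = 0. Let Y ∈ L be the maximal covector with Y ≤ R and Y_e = 0, and let P_top be a tope with (P_top)_e = -R_e and P_top ∉ star(Y). Then μ((0̂,P_top)_{R,e}) = 0, i.e. the Möbius function of the poset T_{R,e} vanishes on the pair (0̂, P_top). -/

import Mathlib

/-!
For a tope `Q` with `Q e = -R e` outside `star(Y)`, the composition `Y ∘ Q` is again a tope (by
face symmetry, `Y ∘ -(Y ∘ -Q) = Y ∘ Q`). Since `Y ≤ R` and `Y e = 0`, it still lies in `T_{R,e}`,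
strictly below `Q`, and it dominates every tope of `star(Y)` below `Q`. So the open interval
`(0̂, Q)` consists of the closed interval `[0̂, Y ∘ Q]`, whose Möbius sum is zero, and of topes
outside `star(Y)`, on which `μ(0̂, ·)` vanishes by induction.
-/

open scoped Classical
open MvPolynomial

noncomputable section

abbrev SV (E : Type*) := E → SignType

variable {E : Type*}

/-- Composition of sign vectors. -/
def scomp (X Y : SV E) : SV E := fun e => if X e = 0 then Y e else X e

/-- Separator of two sign vectors. -/
def sep (X Y : SV E) : Set E := {e | X e = -(Y e) ∧ X e ≠ 0}

/-- Zero set of a sign vector. -/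
def zset (X : SV E) : Set E := {e | X e = 0}

/-- Face symmetry axiom. -/
def FSax (L : Set (SV E)) : Prop := ∀ X ∈ L, ∀ Y ∈ L, scomp X (-Y) ∈ L

/-- Strong elimination axiom. -/
def SEax (L : Set (SV E)) : Prop :=
  ∀ X ∈ L, ∀ Y ∈ L, ∀ e ∈ sep X Y,
    ∃ Z ∈ L, Z e = 0 ∧ ∀ f ∉ sep X Y, Z f = scomp X Y f

/-- Complex of oriented matroids. -/
def IsCOM (L : Set (SV E)) : Prop := FSax L ∧ SEax L

/-- Simplicity. -/
def SimpleCOM (L : Set (SV E)) : Prop :=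
  (∀ e : E, ∀ s : SignType, ∃ X ∈ L, X e = s) ∧
  (∀ e f : E, e ≠ f → ∀ s : SignType, ∃ X ∈ L, X e * X f = s)

/-- Topes: covectors of full support. -/
def Topes (L : Set (SV E)) : Set (SV E) := {X | X ∈ L ∧ ∀ e, X e ≠ 0}

/-- Componentwise order on sign vectors (0 < +, 0 < -). -/
def covLE (X Y : SV E) : Prop := ∀ e, X e = 0 ∨ X e = Y e

def covLT (X Y : SV E) : Prop := covLE X Y ∧ X ≠ Y

def starSet (L : Set (SV E)) (X : SV E) : Set (SV E) := {T | T ∈ Topes L ∧ covLE X T}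

/-- Entry of the signed Varchenko matrix. -/
def varEntry (K : Type*) [Field K] [Fintype E] (P Q : SV E) : MvPolynomial (E × Bool) K :=
  ∏ e ∈ Set.toFinset (sep P Q), X (if P e = 1 then (e, true) else (e, false))

/-- The signed Varchenko matrix, indexed by topes. -/
def varMatrix (K : Type*) [Field K] [Fintype E] (L : Set (SV E)) :
    Matrix ↥(Topes L) ↥(Topes L) (MvPolynomial (E × Bool) K) :=
  Matrix.of fun P Q => varEntry K P.1 Q.1

/-- a(Y) = ∏_{e ∈ z(Y)} x_{e^+} x_{e^-}. -/
def aY (K : Type*) [Field K] [Fintype E] (Y : SV E) : MvPolynomial (E × Bool) K :=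
  ∏ e ∈ Set.toFinset (zset Y), (X (e, true) * X (e, false))

/-- Restriction of a sign vector to a subset. -/
def restr (A : Set E) (X : SV E) : SV ↥A := fun a => X a.1

/-- `m` is the Möbius function of the relation `r` on the (finite) carrier `S`. -/
def IsMobiusOn {α : Type*} [Fintype α] (S : Set α) (r : α → α → Prop) (m : α → α → ℤ) : Prop :=
  (∀ x ∈ S, m x x = 1) ∧
  ∀ x ∈ S, ∀ y ∈ S, r x y → x ≠ y →
    m x y = -∑ z ∈ Set.toFinset {z | z ∈ S ∧ r x z ∧ r z y ∧ z ≠ y}, m x z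

/-- The carrier of the poset `T_{R,e}`: topes with `e`-coordinate `-R e`, plus
an artificial least element `none`. -/
def TReSet (L : Set (SV E)) (R : SV E) (e : E) : Set (Option (SV E)) :=
  insert none (some '' {P | P ∈ Topes L ∧ P e = -(R e)})

/-- The order of the poset `T_{R,e}` (order induced from the tope poset `T_R`,
with `none` as least element). -/
def TReRel (R : SV E) : Option (SV E) → Option (SV E) → Prop
  | none, _ => True
  | some _, none => False
  | some P, some Q => sep R P ⊆ sep R Q

/-- `T^{Y,e}`: topes `P` such that `Y` is the maximal covector with `Y ≤ P` and `Y e = 0`. -/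
def TYe (L : Set (SV E)) (Y : SV E) (e : E) : Set (SV E) :=
  {P | P ∈ Topes L ∧ covLE Y P ∧ Y e = 0 ∧
    ∀ Y' ∈ L, covLE Y' P → Y' e = 0 → covLE Y' Y}

/-- `e` is the maximal element of `S(Q,R)` w.r.t. the linear order `ord`. -/
def maxOfSep (ord : LinearOrder E) (e : E) (Q R : SV E) : Prop :=
  e ∈ sep Q R ∧ ∀ f ∈ sep Q R, ord.le f e

/-- The matrix `M^e`. -/
def Mmat (K : Type*) [Field K] [Fintype E] (L : Set (SV E)) (ord : LinearOrder E) (e : E)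
    (m : SV E → Option (SV E) → Option (SV E) → ℤ) :
    Matrix ↥(Topes L) ↥(Topes L) (MvPolynomial (E × Bool) K) :=
  Matrix.of fun Q R =>
    if Q = R then 1
    else if maxOfSep ord e Q.1 R.1 then
      (-(m R.1 none (some Q.1)) : ℤ) • varEntry K Q.1 R.1
    else 0

/-- The covector set of the cyclic oriented matroid `C_n`. -/
def cyc (E : Type*) : Set (SV E) :=
  {X | X = 0 ∨ ((∃ e, X e = 1) ∧ (∃ f, X f = -1))}

/-- The topal fiber `ρ_{(S⁺,S⁻)}(L')`. -/
def fiber {E' : Type*} (L' : Set (SV E')) (Sp Sm : Set E') : Set (SV ↥((Sp ∪ Sm)ᶜ)) :=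
  restr ((Sp ∪ Sm)ᶜ) '' {Z | Z ∈ L' ∧ (∀ e ∈ Sp, Z e = 1) ∧ (∀ e ∈ Sm, Z e = -1)}

section Mobius

variable {α : Type*} {S : Set α} {r : α → α → Prop}

lemma wellFounded_strict_of_trans_of_antisymm [Finite α]
    (htrans : ∀ a ∈ S, ∀ b ∈ S, ∀ c ∈ S, r a b → r b c → r a c)
    (hanti : ∀ a ∈ S, ∀ b ∈ S, r a b → r b a → a = b) :
    WellFounded fun a b => a ∈ S ∧ b ∈ S ∧ r a b ∧ a ≠ b := by
  refine @Finite.wellFounded_of_trans_of_irrefl _ _ _ ⟨?_⟩ ⟨fun a h => h.2.2.2 rfl⟩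
  rintro a b c ⟨ha, hb, hab, hab'⟩ ⟨-, hc, hbc, -⟩
  refine ⟨ha, hc, htrans a ha b hb c hc hab hbc, ?_⟩
  rintro rfl
  exact hab' (hanti a ha b hb hab hbc)

theorem IsMobiusOn.eq_zero_of_retract [Fintype α] {m : α → α → ℤ} (hm : IsMobiusOn S r m)
    (htrans : ∀ a ∈ S, ∀ b ∈ S, ∀ c ∈ S, r a b → r b c → r a c)
    (hanti : ∀ a ∈ S, ∀ b ∈ S, r a b → r b a → a = b)
    {x : α} (hx : x ∈ S) (D : Set α)
    (hD : ∀ q ∈ S, q ∈ D → r x q → ∃ q' ∈ S, r x q' ∧ r q' q ∧ q' ≠ x ∧ q' ≠ q ∧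
      ∀ z ∈ S, r x z → r z q → z ∉ D → r z q')
    {q : α} (hq : q ∈ S) (hqD : q ∈ D) (hxq : r x q) : m x q = 0 := by
  induction q using (wellFounded_strict_of_trans_of_antisymm htrans hanti).induction with
  | _ q ih =>
  obtain ⟨q', hq', hxq', hq'q, hq'x, hq'q', hdom⟩ := hD q hq hqD hxq
  have hxq_ne : x ≠ q := by
    rintro rfl
    exact hq'x (hanti q' hq' x hx hq'q hxq')
  set I : α → Finset α := fun y => Set.toFinset {z | z ∈ S ∧ r x z ∧ r z y ∧ z ≠ y} with hI
  have hmem : ∀ {y z}, z ∈ I y ↔ z ∈ S ∧ r x z ∧ r z y ∧ z ≠ y := by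
    simp only [hI, Set.mem_toFinset, Set.mem_ofPred_eq, implies_true]
  have hsub : insert q' (I q') ⊆ I q := by
    intro z hz
    rcases Finset.mem_insert.1 hz with rfl | hz
    · exact hmem.2 ⟨hq', hxq', hq'q, hq'q'⟩
    obtain ⟨hzS, hxz, hzq', hzq'_ne⟩ := hmem.1 hz
    refine hmem.2 ⟨hzS, hxz, htrans z hzS q' hq' q hq hzq' hq'q, ?_⟩
    rintro rfl
    exact hzq'_ne (hanti z hzS q' hq' hzq' hq'q)
  have hvanish : ∀ z ∈ I q, z ∉ insert q' (I q') → m x z = 0 := by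
    intro z hz hz'
    obtain ⟨hzS, hxz, hzq, hzq_ne⟩ := hmem.1 hz
    have hzD : z ∈ D := by
      by_contra hzD
      refine hz' (Finset.mem_insert.2 (Or.inr (hmem.2 ⟨hzS, hxz, hdom z hzS hxz hzq hzD, ?_⟩)))
      rintro rfl
      exact hz' (Finset.mem_insert_self _ _)
    exact ih z ⟨hzS, hq, hzq, hzq_ne⟩ hzS hzD hxz
  have hq'_notMem : q' ∉ I q' := fun h => (hmem.1 h).2.2.2 rfl
  -- `[x, q)` is `[x, q']` plus elements of `D`, and the Möbius sum over `[x, q']` is zero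
  rw [hm.2 x hx q hq hxq hxq_ne, ← Finset.sum_subset hsub hvanish,
    Finset.sum_insert hq'_notMem, hm.2 x hx q' hq' hxq' hq'x.symm, neg_add_cancel, neg_zero]

end Mobius

section SignVectors

variable {E : Type*}

lemma scomp_neg_scomp_neg (X Y : SV E) : scomp X (-scomp X (-Y)) = scomp X Y := by
  funext f
  by_cases h : X f = 0 <;> simp [scomp, h]

lemma FSax.scomp_mem {L : Set (SV E)} (hL : FSax L) {X Y : SV E} (hX : X ∈ L) (hY : Y ∈ L) :
    scomp X Y ∈ L :=
  scomp_neg_scomp_neg X Y ▸ hL X hX _ (hL X hX Y hY)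

lemma FSax.scomp_mem_topes {L : Set (SV E)} (hL : FSax L) {X T : SV E} (hX : X ∈ L)
    (hT : T ∈ Topes L) : scomp X T ∈ Topes L :=
  ⟨hL.scomp_mem hX hT.1, fun f => by by_cases h : X f = 0 <;> simp [scomp, h, hT.2 f]⟩

lemma covLE_scomp (X Y : SV E) : covLE X (scomp X Y) := fun f => by
  by_cases h : X f = 0 <;> simp [scomp, h]

lemma notMem_sep_of_covLE {X R Z : SV E} (hXR : covLE X R) (hXZ : covLE X Z) {f : E}
    (hf : X f ≠ 0) : f ∉ sep R Z := by
  rintro ⟨hRZ, hR⟩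
  rw [← (hXZ f).resolve_left hf, (hXR f).resolve_left hf] at hRZ
  have key : ∀ s : SignType, s ≠ 0 → s ≠ -s := by decide
  exact key _ hR hRZ

lemma sep_scomp_subset {X R : SV E} (hXR : covLE X R) (Q : SV E) :
    sep R (scomp X Q) ⊆ sep R Q := by
  intro f hf
  by_cases h : X f = 0
  · simpa [sep, scomp, h] using hf
  · exact absurd hf (notMem_sep_of_covLE hXR (covLE_scomp X Q) h)

lemma sep_subset_sep_scomp {X R Z Q : SV E} (hXR : covLE X R) (hXZ : covLE X Z)
    (hZQ : sep R Z ⊆ sep R Q) : sep R Z ⊆ sep R (scomp X Q) := by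
  intro f hf
  by_cases h : X f = 0
  · simpa [sep, scomp, h] using hZQ hf
  · exact absurd hf (notMem_sep_of_covLE hXR hXZ h)

lemma eq_of_sep_eq {R P Q : SV E} (hR : ∀ f, R f ≠ 0) (hP : ∀ f, P f ≠ 0) (hQ : ∀ f, Q f ≠ 0)
    (h : sep R P = sep R Q) : P = Q := by
  funext f
  have hf : R f = -P f ↔ R f = -Q f := by simpa [sep, hR f] using Set.ext_iff.1 h f
  have key : ∀ a b c : SignType, a ≠ 0 → b ≠ 0 → c ≠ 0 → (a = -b ↔ a = -c) → b = c := by decide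
  exact key _ _ _ (hR f) (hP f) (hQ f) hf

end SignVectors

section TopePoset

variable {E : Type*}

lemma some_mem_TReSet {L : Set (SV E)} {R P : SV E} {e : E} :
    some P ∈ TReSet L R e ↔ P ∈ Topes L ∧ P e = -(R e) := by
  simp [TReSet]

lemma TReRel_trans (R : SV E) :
    ∀ a b c : Option (SV E), TReRel R a b → TReRel R b c → TReRel R a c
  | none, _, _, _, _ => trivial
  | some _, some _, some _, h₁, h₂ => Set.Subset.trans h₁ h₂
  | some _, none, _, h, _ => h.elim
  | some _, some _, none, _, h => h.elim

lemma TReRel_antisymm {L : Set (SV E)} {R : SV E} (hR : ∀ f, R f ≠ 0) (e : E) :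
    ∀ a ∈ TReSet L R e, ∀ b ∈ TReSet L R e, TReRel R a b → TReRel R b a → a = b
  | none, _, none, _, _, _ => rfl
  | none, _, some _, _, _, h => h.elim
  | some _, _, none, _, h, _ => h.elim
  | some _, hP, some _, hQ, h₁, h₂ =>
    congrArg some (eq_of_sep_eq hR (some_mem_TReSet.1 hP).1.2 (some_mem_TReSet.1 hQ).1.2
      (Set.Subset.antisymm h₁ h₂))

end TopePoset

theorem moebius_vanishes_outside_star_general {E : Type*} [Fintype E] [DecidableEq E]
    (L : Set (SV E)) (hCOM : IsCOM L)
    (R : SV E) (hR : R ∈ Topes L) (e : E)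
    (Y : SV E) (hYL : Y ∈ L) (hYR : covLE Y R) (hYe : Y e = 0)
    (Ptop : SV E) (hPt : Ptop ∈ Topes L) (hPte : Ptop e = -(R e))
    (hPtY : Ptop ∉ starSet L Y)
    (m : Option (SV E) → Option (SV E) → ℤ)
    (hm : IsMobiusOn (TReSet L R e) (TReRel R) m) :
    m none (some Ptop) = 0 := by
  refine hm.eq_zero_of_retract (fun a _ b _ c _ => TReRel_trans R a b c) (TReRel_antisymm hR.2 e)
    (Set.mem_insert _ _) (some '' (starSet L Y)ᶜ) ?_ (some_mem_TReSet.2 ⟨hPt, hPte⟩)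
    ⟨Ptop, hPtY, rfl⟩ trivial
  rintro _ hQS ⟨Q, hQY, rfl⟩ -
  obtain ⟨hQ, hQe⟩ := some_mem_TReSet.1 hQS
  have hYQ : ¬ covLE Y Q := fun h => hQY ⟨hQ, h⟩
  have hQ'e : scomp Y Q e = -(R e) := by simp [scomp, hYe, hQe]
  refine ⟨some (scomp Y Q), some_mem_TReSet.2 ⟨hCOM.1.scomp_mem_topes hYL hQ, hQ'e⟩, trivial,
    sep_scomp_subset hYR Q, Option.some_ne_none _,
    fun h => hYQ (Option.some_inj.1 h ▸ covLE_scomp Y Q), ?_⟩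
  rintro (_ | Z) hZS - hZQ hZD
  · trivial
  · have hYZ : covLE Y Z := by
      by_contra hYZ
      exact hZD ⟨Z, fun h => hYZ h.2, rfl⟩
    exact sep_subset_sep_scomp hYR hYZ hZQ

/-- if `e` defines a proper face of the tope `R`, `Y` is the maximal
covector with `Y ≤ R`, `Y e = 0`, and `P_top` is a tope with `(P_top) e = -R e`
not in `star(Y)`, then the Möbius function of `T_{R,e}` vanishes on `(0̂, P_top)`. -/
theorem moebius_vanishes_outside_star {E : Type*} [Fintype E] [DecidableEq E]
    (L : Set (SV E)) (hCOM : IsCOM L) (hsimple : SimpleCOM L)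
    (R : SV E) (hR : R ∈ Topes L) (e : E)
    (hface : ∃ X ∈ L, X ≠ 0 ∧ covLE X R ∧ X e = 0)
    (Y : SV E) (hYL : Y ∈ L) (hYR : covLE Y R) (hYe : Y e = 0)
    (hYmax : ∀ X ∈ L, covLE X R → X e = 0 → covLE X Y)
    (Ptop : SV E) (hPt : Ptop ∈ Topes L) (hPte : Ptop e = -(R e))
    (hPtY : Ptop ∉ starSet L Y)
    (m : Option (SV E) → Option (SV E) → ℤ)
    (hm : IsMobiusOn (TReSet L R e) (TReRel R) m) :
    m none (some Ptop) = 0 :=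
  moebius_vanishes_outside_star_general L hCOM R hR e Y hYL hYR hYe Ptop hPt hPte hPtY m hm

end
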